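/- arXiv:2205.10327 — 4 statements merged into one kernel-verified Lean document; each statement's English description precedes it below -/
import Mathlib

section
/- Let Z be a random variable taking values in {−1, 0, 1}, let F = P(Z = −1) and A = E[Z], and let α ∈ (0,1). Then sup_{β ∈ ℝ} (β + α⁻¹ E[min{Z − β, 0}]) = max{−1, −α⁻¹ P(Z = −1), 1 − α⁻¹ (P(Z = −1) + P(Z = 0) + P(Z = −1))}; equivalently, since P(Z = 0) = 1 − A − 2F, the supremum equals max{−1, −α⁻¹ F, 1 − α⁻¹(1 − A)}. -/
open MeasureTheory

set_option maxHeartbeats 1000000 in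
theorem stmt_7 {Ω : Type*} [MeasurableSpace Ω] (μ : Measure Ω) [IsProbabilityMeasure μ]
    (Z : Ω → ℝ) (hZ : Measurable Z) (hZv : ∀ ω, Z ω = -1 ∨ Z ω = 0 ∨ Z ω = 1)
    (a : ℝ) (ha0 : 0 < a) (ha1 : a < 1) :
    (⨆ β : ℝ, (β + a⁻¹ * ∫ ω, min (Z ω - β) 0 ∂μ)) =
      max (-1) (max (-(a⁻¹ * (μ {ω | Z ω = -1}).toReal))
        (1 - a⁻¹ * (1 - ∫ ω, Z ω ∂μ))) := by
  have hm1 : MeasurableSet {ω | Z ω = (-1:ℝ)} := hZ (measurableSet_singleton (-1))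
  have hm0 : MeasurableSet {ω | Z ω = (0:ℝ)} := hZ (measurableSet_singleton 0)
  have hmp : MeasurableSet {ω | Z ω = (1:ℝ)} := hZ (measurableSet_singleton 1)
  set p : ℝ := (μ {ω | Z ω = (-1:ℝ)}).toReal with hpdef
  set q : ℝ := (μ {ω | Z ω = (0:ℝ)}).toReal with hqdef
  set r : ℝ := (μ {ω | Z ω = (1:ℝ)}).toReal with hrdef
  have key : ∀ g : ℝ → ℝ, ∫ ω, g (Z ω) ∂μ = p * g (-1) + q * g 0 + r * g 1 := by
    intro g
    have hfun : (fun ω => g (Z ω)) = fun ω =>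
        {ω | Z ω = (-1:ℝ)}.indicator (fun _ => g (-1)) ω +
        {ω | Z ω = (0:ℝ)}.indicator (fun _ => g 0) ω +
        {ω | Z ω = (1:ℝ)}.indicator (fun _ => g 1) ω := by
      funext ω
      rcases hZv ω with h | h | h <;>
        simp [Set.indicator_apply, Set.mem_setOf_eq, h,
          show (-1:ℝ) ≠ 1 by norm_num, show (1:ℝ) ≠ -1 by norm_num,
          show (-1:ℝ) ≠ 0 by norm_num, show (0:ℝ) ≠ -1 by norm_num,
          show (1:ℝ) ≠ 0 by norm_num, show (0:ℝ) ≠ 1 by norm_num]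
    have i1 : Integrable ({ω | Z ω = (-1:ℝ)}.indicator (fun _ => g (-1))) μ :=
      (integrable_const _).indicator hm1
    have i0 : Integrable ({ω | Z ω = (0:ℝ)}.indicator (fun _ => g 0)) μ :=
      (integrable_const _).indicator hm0
    have ip : Integrable ({ω | Z ω = (1:ℝ)}.indicator (fun _ => g 1)) μ :=
      (integrable_const _).indicator hmp
    have e1 : ∫ ω, ({ω | Z ω = (-1:ℝ)}.indicator (fun _ => g (-1)) ω +
        {ω | Z ω = (0:ℝ)}.indicator (fun _ => g 0) ω) +
        {ω | Z ω = (1:ℝ)}.indicator (fun _ => g 1) ω ∂μ =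
        (∫ ω, ({ω | Z ω = (-1:ℝ)}.indicator (fun _ => g (-1)) ω +
          {ω | Z ω = (0:ℝ)}.indicator (fun _ => g 0) ω) ∂μ) +
        ∫ ω, {ω | Z ω = (1:ℝ)}.indicator (fun _ => g 1) ω ∂μ :=
      integral_add (i1.add i0) ip
    have e2 : ∫ ω, ({ω | Z ω = (-1:ℝ)}.indicator (fun _ => g (-1)) ω +
        {ω | Z ω = (0:ℝ)}.indicator (fun _ => g 0) ω) ∂μ =
        (∫ ω, {ω | Z ω = (-1:ℝ)}.indicator (fun _ => g (-1)) ω ∂μ) +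
        ∫ ω, {ω | Z ω = (0:ℝ)}.indicator (fun _ => g 0) ω ∂μ :=
      integral_add i1 i0
    rw [hfun, e1, e2,
      integral_indicator_const _ hm1, integral_indicator_const _ hm0,
      integral_indicator_const _ hmp]
    simp [smul_eq_mul]
    rfl
  have hp0 : 0 ≤ p := ENNReal.toReal_nonneg
  have hq0 : 0 ≤ q := ENNReal.toReal_nonneg
  have hr0 : 0 ≤ r := ENNReal.toReal_nonneg
  have hsum : p + q + r = 1 := by
    have h := key (fun _ => (1:ℝ))
    simp at h
    linarith
  have hEZ : ∫ ω, Z ω ∂μ = r - p := by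
    have h := key id
    simp only [id] at h
    rw [h]; ring
  have hF : ∀ β : ℝ, ∫ ω, min (Z ω - β) 0 ∂μ =
      p * min (-1 - β) 0 + q * min (-β) 0 + r * min (1 - β) 0 := by
    intro β
    have h := key (fun x => min (x - β) 0)
    simpa using h
  have hainv : 0 < a⁻¹ := inv_pos.mpr ha0
  have hmul : a * a⁻¹ = 1 := mul_inv_cancel₀ ha0.ne'
  have ha' : 1 ≤ a⁻¹ := by nlinarith
  set M : ℝ := max (-1) (max (-(a⁻¹ * p)) (1 - a⁻¹ * (1 - ∫ ω, Z ω ∂μ))) with hMdef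
  have hM1 : (-1 : ℝ) ≤ M := le_max_left _ _
  have hM2 : -(a⁻¹ * p) ≤ M := le_trans (le_max_left _ _) (le_max_right _ _)
  have hM3 : 1 - a⁻¹ * (2 * p + q) ≤ M := by
    have : 1 - a⁻¹ * (1 - ∫ ω, Z ω ∂μ) = 1 - a⁻¹ * (2 * p + q) := by
      rw [hEZ]; ring_nf; nlinarith [hsum]
    calc 1 - a⁻¹ * (2 * p + q) = 1 - a⁻¹ * (1 - ∫ ω, Z ω ∂μ) := this.symm
      _ ≤ M := le_trans (le_max_right _ _) (le_max_right _ _)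
  have hub : ∀ β : ℝ, β + a⁻¹ * ∫ ω, min (Z ω - β) 0 ∂μ ≤ M := by
    intro β
    rw [hF β]
    rcases le_total β (-1) with h | h
    · rw [min_eq_right (by linarith : (0:ℝ) ≤ -1 - β),
        min_eq_right (by linarith : (0:ℝ) ≤ -β),
        min_eq_right (by linarith : (0:ℝ) ≤ 1 - β)]
      have : β + a⁻¹ * (p * 0 + q * 0 + r * 0) = β := by ring
      rw [this]; linarith
    · rcases le_total β 0 with h' | h'
      · rw [min_eq_left (by linarith : -1 - β ≤ 0),
          min_eq_right (by linarith : (0:ℝ) ≤ -β),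
          min_eq_right (by linarith : (0:ℝ) ≤ 1 - β)]
        rcases le_total (a⁻¹ * p) 1 with hc | hc
        · have : β + a⁻¹ * (p * (-1 - β) + q * 0 + r * 0) ≤ -(a⁻¹ * p) := by nlinarith
          linarith
        · have : β + a⁻¹ * (p * (-1 - β) + q * 0 + r * 0) ≤ -1 := by nlinarith
          linarith
      · rcases le_total β 1 with h'' | h''
        · rw [min_eq_left (by linarith : -1 - β ≤ 0),
            min_eq_left (by linarith : -β ≤ 0),
            min_eq_right (by linarith : (0:ℝ) ≤ 1 - β)]
          rcases le_total (a⁻¹ * (p + q)) 1 with hc | hc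
          · have : β + a⁻¹ * (p * (-1 - β) + q * (-β) + r * 0) ≤ 1 - a⁻¹ * (2 * p + q) := by
              nlinarith
            linarith
          · have : β + a⁻¹ * (p * (-1 - β) + q * (-β) + r * 0) ≤ -(a⁻¹ * p) := by
              nlinarith
            linarith
        · rw [min_eq_left (by linarith : -1 - β ≤ 0),
            min_eq_left (by linarith : -β ≤ 0),
            min_eq_left (by linarith : 1 - β ≤ 0)]
          have hz : a⁻¹ * (1 - β) * (p + q + r - 1) = 0 := by rw [hsum]; ring
          have h1 : (0:ℝ) ≤ (β - 1) * (a⁻¹ - 1) :=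
            mul_nonneg (by linarith) (by linarith)
          have : β + a⁻¹ * (p * (-1 - β) + q * (-β) + r * (1 - β)) ≤ 1 - a⁻¹ * (2 * p + q) := by
            nlinarith [hz, h1]
          linarith
  have hbdd : BddAbove (Set.range fun β : ℝ => β + a⁻¹ * ∫ ω, min (Z ω - β) 0 ∂μ) := by
    refine ⟨M, ?_⟩
    rintro x ⟨β, rfl⟩
    exact hub β
  apply le_antisymm
  · exact ciSup_le hub
  · have hv1 : (-1 : ℝ) + a⁻¹ * ∫ ω, min (Z ω - (-1)) 0 ∂μ = -1 := by
      rw [hF (-1)]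
      norm_num
    have hv0 : (0 : ℝ) + a⁻¹ * ∫ ω, min (Z ω - 0) 0 ∂μ = -(a⁻¹ * p) := by
      rw [hF 0]
      norm_num
    have hvp : (1 : ℝ) + a⁻¹ * ∫ ω, min (Z ω - 1) 0 ∂μ = 1 - a⁻¹ * (1 - ∫ ω, Z ω ∂μ) := by
      rw [hF 1, hEZ]
      norm_num
      ring_nf
      nlinarith [hsum]
    refine max_le ?_ (max_le ?_ ?_)
    · rw [← hv1]; exact le_ciSup hbdd (-1)
    · rw [← hv0]; exact le_ciSup hbdd 0
    · rw [← hvp]; exact le_ciSup hbdd 1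
end

section
/- Let f, g : X → ℝ be measurable functions on a probability space and suppose f satisfies an α-margin with constant t0 > 0 (i.e. P(0 < |f(X)| ≤ t) ≤ (t/t0)^α for all t > 0), for finite α > 0. Then E[(1{g(X) ≤ 0} − 1{f(X) ≤ 0})·f(X)] ≤ c·‖f − g‖_∞^{1+α} for some constant c depending only on t0 and α; in fact one may take c = t0^{−α}, i.e. the bound E[(1{g≤0} − 1{f≤0})f] ≤ ‖f − g‖_∞^{1+α}/t0^α. -/
open MeasureTheory

/-! On the event where the signs of `f` and `g` disagree one has `0 < |f| ≤ |f - g| ≤ C`, and there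
the integrand equals `|f| ≤ C`; elsewhere it vanishes. Hence the integral is at
most `C · P(0 < |f| ≤ C) ≤ C · (C / t0) ^ α` by the margin condition. -/

def HasMargin {Ω : Type*} [MeasurableSpace Ω] (μ : Measure Ω) (f : Ω → ℝ) (t0 α : ℝ) : Prop :=
  ∀ t : ℝ, 0 < t → (μ {x | 0 < |f x| ∧ |f x| ≤ t}).toReal ≤ (t / t0) ^ α

lemma sign_disagreement_mul_le {a b C : ℝ} (h : |a - b| ≤ C) :
    ((if b ≤ 0 then (1 : ℝ) else 0) - (if a ≤ 0 then (1 : ℝ) else 0)) * a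
      ≤ if 0 < |a| ∧ |a| ≤ C then C else 0 := by
  split_ifs <;> grind [abs_le]

section

variable {Ω : Type*} [MeasurableSpace Ω] (μ : Measure Ω) {f g : Ω → ℝ}

lemma integral_sign_disagreement_mul_le [IsFiniteMeasure μ] (hf : Measurable f) {C : ℝ}
    (hC : ∀ᵐ x ∂μ, |f x - g x| ≤ C)
    (hInt : Integrable (fun x =>
      ((if g x ≤ 0 then (1 : ℝ) else 0) - (if f x ≤ 0 then (1 : ℝ) else 0)) * f x) μ) :
    (∫ x, ((if g x ≤ 0 then (1 : ℝ) else 0) - (if f x ≤ 0 then (1 : ℝ) else 0)) * f x ∂μ)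
      ≤ (μ {x | 0 < |f x| ∧ |f x| ≤ C}).toReal * C := by
  set S := {x | 0 < |f x| ∧ |f x| ≤ C}
  have hS : MeasurableSet S :=
    (measurableSet_lt measurable_const hf.abs).inter (measurableSet_le hf.abs measurable_const)
  calc _ ≤ ∫ x, S.indicator (fun _ => C) x ∂μ := by
        refine integral_mono_ae hInt ((integrable_const C).indicator hS) ?_
        filter_upwards [hC] with x hx
        simpa only [Set.indicator_apply, S, Set.mem_ofPred_eq] using sign_disagreement_mul_le hx
    _ = (μ S).toReal * C := by rw [integral_indicator_const _ hS, smul_eq_mul, Measure.real]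

lemma HasMargin.measure_mul_le {t0 α : ℝ} (hmargin : HasMargin μ f t0 α) (ht0 : 0 < t0) {C : ℝ}
    (hC : 0 ≤ C) :
    (μ {x | 0 < |f x| ∧ |f x| ≤ C}).toReal * C ≤ C ^ (1 + α) / t0 ^ α := by
  rcases hC.eq_or_lt with rfl | hC
  · rw [mul_zero]; positivity
  · calc _ ≤ (C / t0) ^ α * C := mul_le_mul_of_nonneg_right (hmargin C hC) hC.le
      _ = C ^ (1 + α) / t0 ^ α := by
        rw [Real.div_rpow hC.le ht0.le, Real.rpow_add hC, Real.rpow_one]; ring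

end

theorem stmt_11_general {Ω : Type*} [MeasurableSpace Ω] (μ : Measure Ω) [IsProbabilityMeasure μ]
    (f g : Ω → ℝ) (hf : Measurable f)
    (t0 alpha : ℝ) (ht0 : 0 < t0)
    (hmargin : ∀ t : ℝ, 0 < t → (μ {x | 0 < |f x| ∧ |f x| ≤ t}).toReal ≤ (t / t0) ^ alpha)
    (C : ℝ) (hC0 : 0 ≤ C) (hC : ∀ᵐ x ∂μ, |f x - g x| ≤ C)
    (hInt : Integrable (fun x =>
      ((if g x ≤ 0 then (1 : ℝ) else 0) - (if f x ≤ 0 then (1 : ℝ) else 0)) * f x) μ) :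
    (∫ x, ((if g x ≤ 0 then (1 : ℝ) else 0) - (if f x ≤ 0 then (1 : ℝ) else 0)) * f x ∂μ)
      ≤ C ^ (1 + alpha) / t0 ^ alpha :=
  (integral_sign_disagreement_mul_le μ hf hC hInt).trans
    (HasMargin.measure_mul_le μ hmargin ht0 hC0)

theorem stmt_11 {Ω : Type*} [MeasurableSpace Ω] (μ : Measure Ω) [IsProbabilityMeasure μ]
    (f g : Ω → ℝ) (hf : Measurable f) (hg : Measurable g)
    (t0 alpha : ℝ) (ht0 : 0 < t0) (halpha : 0 < alpha)
    (hmargin : ∀ t : ℝ, 0 < t → (μ {x | 0 < |f x| ∧ |f x| ≤ t}).toReal ≤ (t / t0) ^ alpha)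
    (C : ℝ) (hC0 : 0 ≤ C) (hC : ∀ᵐ x ∂μ, |f x - g x| ≤ C)
    (hInt : Integrable (fun x =>
      ((if g x ≤ 0 then (1 : ℝ) else 0) - (if f x ≤ 0 then (1 : ℝ) else 0)) * f x) μ) :
    (∫ x, ((if g x ≤ 0 then (1 : ℝ) else 0) - (if f x ≤ 0 then (1 : ℝ) else 0)) * f x ∂μ)
      ≤ C ^ (1 + alpha) / t0 ^ alpha :=
  stmt_11_general μ f g hf t0 alpha ht0 hmargin C hC0 hC hInt
end

section
/- Let f, g : X → ℝ be measurable and suppose f satisfies an α-margin with constant t0 for finite α ≥ 0 (P(0 < |f(X)| ≤ t) ≤ (t/t0)^α for all t > 0). Then for any p ∈ [1, ∞) and any t > 0, P(1{g(X) ≤ 0} ≠ 1{f(X) ≤ 0}, f(X) ≠ 0) ≤ (t/t0)^α + ‖f − g‖_p^p · t^{−p}; consequently, choosing t = ‖f − g‖_p^{p/(p+α)}, one obtains P(1{g(X) ≤ 0} ≠ 1{f(X) ≤ 0}, f(X) ≠ 0) ≤ (1 + t0^{−α})·‖f − g‖_p^{pα/(p+α)}. -/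
open MeasureTheory

theorem stmt_12 {Ω : Type*} [MeasurableSpace Ω] (μ : Measure Ω) [IsProbabilityMeasure μ]
    (f g : Ω → ℝ) (hf : Measurable f) (hg : Measurable g)
    (t0 alpha p : ℝ) (ht0 : 0 < t0) (halpha : 0 ≤ alpha) (hp : 1 ≤ p)
    (hmargin : ∀ t : ℝ, 0 < t → (μ {x | 0 < |f x| ∧ |f x| ≤ t}).toReal ≤ (t / t0) ^ alpha)
    (hInt : Integrable (fun x => |f x - g x| ^ p) μ)
    (N : ℝ) (hN : N = (∫ x, |f x - g x| ^ p ∂μ) ^ (1 / p)) :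
    (∀ t : ℝ, 0 < t →
      (μ {x | (if g x ≤ 0 then (1 : ℝ) else 0) ≠ (if f x ≤ 0 then (1 : ℝ) else 0) ∧
          f x ≠ 0}).toReal ≤ (t / t0) ^ alpha + N ^ p * t ^ (-p)) ∧
    (μ {x | (if g x ≤ 0 then (1 : ℝ) else 0) ≠ (if f x ≤ 0 then (1 : ℝ) else 0) ∧
        f x ≠ 0}).toReal ≤ (1 + t0 ^ (-alpha)) * N ^ (p * alpha / (p + alpha)) := by
  have hppos : 0 < p := lt_of_lt_of_le one_pos hp
  have hInn : 0 ≤ ∫ x, |f x - g x| ^ p ∂μ :=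
    integral_nonneg fun x => Real.rpow_nonneg (abs_nonneg _) _
  have hNnn : 0 ≤ N := hN ▸ Real.rpow_nonneg hInn _
  have hNp : N ^ p = ∫ x, |f x - g x| ^ p ∂μ := by
    rw [hN, ← Real.rpow_mul hInn, one_div, inv_mul_cancel₀ hppos.ne', Real.rpow_one]
  set S := {x | (if g x ≤ 0 then (1 : ℝ) else 0) ≠ (if f x ≤ 0 then (1 : ℝ) else 0) ∧
      f x ≠ 0} with hS
  have key : ∀ t : ℝ, 0 < t →
      (μ S).toReal ≤ (t / t0) ^ alpha + N ^ p * t ^ (-p) := by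
    intro t ht
    have hsub : S ⊆ {x | 0 < |f x| ∧ |f x| ≤ t} ∪ {x | t ^ p ≤ |f x - g x| ^ p} := by
      rintro x ⟨hne, hfx⟩
      by_cases hle : |f x| ≤ t
      · exact Or.inl ⟨abs_pos.mpr hfx, hle⟩
      · push_neg at hle
        have hfg : t < |f x - g x| := by
          by_cases hf0 : f x ≤ 0
          · have hg0 : ¬ g x ≤ 0 := fun h => hne (by simp [h, hf0])
            push_neg at hg0
            have h1 : t < -f x := by rw [abs_of_nonpos hf0] at hle; exact hle
            calc t < -(f x - g x) := by linarith
              _ ≤ |f x - g x| := neg_le_abs _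
          · have hg0 : g x ≤ 0 := by
              by_contra h
              exact hne (by simp [h, hf0])
            push_neg at hf0
            have h1 : t < f x := by rw [abs_of_pos hf0] at hle; exact hle
            calc t < f x - g x := by linarith
              _ ≤ |f x - g x| := le_abs_self _
        exact Or.inr (Real.rpow_le_rpow ht.le hfg.le hppos.le)
    have hmono : μ S ≤ μ {x | 0 < |f x| ∧ |f x| ≤ t} + μ {x | t ^ p ≤ |f x - g x| ^ p} :=
      le_trans (measure_mono hsub) (measure_union_le _ _)
    have hfin1 : μ {x | 0 < |f x| ∧ |f x| ≤ t} ≠ ⊤ := measure_ne_top μ _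
    have hfin2 : μ {x | t ^ p ≤ |f x - g x| ^ p} ≠ ⊤ := measure_ne_top μ _
    have htoReal : (μ S).toReal ≤ (μ {x | 0 < |f x| ∧ |f x| ≤ t}).toReal +
        (μ {x | t ^ p ≤ |f x - g x| ^ p}).toReal := by
      rw [← ENNReal.toReal_add hfin1 hfin2]
      exact ENNReal.toReal_mono (ENNReal.add_ne_top.mpr ⟨hfin1, hfin2⟩) hmono
    have hmarkov : (μ {x | t ^ p ≤ |f x - g x| ^ p}).toReal ≤ N ^ p * t ^ (-p) := by
      have htp : 0 < t ^ p := Real.rpow_pos_of_pos ht p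
      have h := mul_meas_ge_le_integral_of_nonneg
        (ae_of_all μ fun x => Real.rpow_nonneg (abs_nonneg _) p) hInt (t ^ p)
      rw [← hNp] at h
      rw [Real.rpow_neg ht.le]
      rw [mul_comm] at h
      calc (μ {x | t ^ p ≤ |f x - g x| ^ p}).toReal
          ≤ N ^ p / t ^ p := (le_div_iff₀ htp).mpr h
        _ = N ^ p * (t ^ p)⁻¹ := div_eq_mul_inv _ _
    calc (μ S).toReal ≤ _ := htoReal
      _ ≤ (t / t0) ^ alpha + N ^ p * t ^ (-p) := add_le_add (hmargin t ht) hmarkov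
  refine ⟨key, ?_⟩
  rcases eq_or_lt_of_le halpha with h0 | hapos
  · -- alpha = 0
    have : (1 + t0 ^ (-alpha)) * N ^ (p * alpha / (p + alpha)) = 2 := by
      rw [← h0]; norm_num
    rw [this]
    have h1 : (μ S).toReal ≤ 1 := by
      simpa using ENNReal.toReal_mono ENNReal.one_ne_top (prob_le_one (μ := μ) (s := S))
    linarith
  · rcases eq_or_lt_of_le hNnn with hN0 | hNpos
    · -- N = 0 : then f = g a.e., and S ⊆ {f ≠ g}
      have hI0 : ∫ x, |f x - g x| ^ p ∂μ = 0 := by rw [← hNp, ← hN0, Real.zero_rpow hppos.ne']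
      have hae : ∀ᵐ x ∂μ, |f x - g x| ^ p = 0 :=
        (integral_eq_zero_iff_of_nonneg (fun x => Real.rpow_nonneg (abs_nonneg _) _) hInt).mp hI0
          |>.mono fun x hx => hx
      have hae2 : ∀ᵐ x ∂μ, f x = g x := by
        filter_upwards [hae] with x hx
        have : |f x - g x| = 0 := by
          by_contra h
          have habs : 0 < |f x - g x| := lt_of_le_of_ne (abs_nonneg _) (Ne.symm h)
          exact (Real.rpow_pos_of_pos habs p).ne' hx
        have := abs_eq_zero.mp this
        linarith
      have hμS : μ S = 0 := by
        refine measure_mono_null ?_ (ae_iff.mp hae2)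
        rintro x ⟨hne, -⟩ hfg
        exact hne (by simp [hfg])
      rw [hμS, ← hN0, Real.zero_rpow]
      · simp
      · positivity
    · -- N > 0
      set t := N ^ (p / (p + alpha)) with htdef
      have hpa : 0 < p + alpha := by linarith
      have ht : 0 < t := Real.rpow_pos_of_pos hNpos _
      have h := key t ht
      have e1 : (t / t0) ^ alpha = t0 ^ (-alpha) * N ^ (p * alpha / (p + alpha)) := by
        rw [Real.div_rpow ht.le ht0.le, htdef, ← Real.rpow_mul hNpos.le,
          Real.rpow_neg ht0.le, div_eq_mul_inv, mul_comm]
        ring_nf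
      have e2 : N ^ p * t ^ (-p) = N ^ (p * alpha / (p + alpha)) := by
        rw [htdef, ← Real.rpow_mul hNpos.le, ← Real.rpow_add hNpos]
        congr 1
        field_simp
        ring
      rw [e1, e2] at h
      calc (μ S).toReal ≤ _ := h
        _ = (1 + t0 ^ (-alpha)) * N ^ (p * alpha / (p + alpha)) := by ring
end

section
/- Let (X, A, Y) be random with A, Y ∈ {0,1}, e(x) = P(A=1 | X=x) ∈ [ē, 1−ē] with ē > 0, and μ(x,a) = E[Y | X=x, A=a]. Let ě : 𝒳 → [ē, 1−ē] and μ̌ : 𝒳 × {0,1} → [0,1] be measurable, and suppose either ě = e or μ̌ = μ. Then for any measurable w : 𝒳 → [−1, 1], |E[w(X)·((A − ě(X))·μ̌(X,0) + (1−A)·Y)/(1 − ě(X))] − E[w(X)·μ(X,0)]| ≤ ē⁻¹·‖e − ě‖₂·‖μ(·,0) − μ̌(·,0)‖₂, where ‖·‖₂ is the L²-norm over the distribution of X. -/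
/-!
With `r = w / (1 - ě)`, the AIPW score is `r(X) m̌0(X) A + r(X) (1 - A) Y - r(X) m̌0(X) ě(X)`.
Conditioning on `X` replaces `A` by `e(X)` and `(1 - A) Y` by `(1 - e(X)) m0(X)`, which turns
the bias into `E[r(X) (ě(X) - e(X)) (m0(X) - m̌0(X))]`. As `|r| ≤ ē⁻¹`, Cauchy–Schwarz bounds
it by the product of the two `L²` errors.
-/

open MeasureTheory

section CauchySchwarz

variable {Ω : Type*} [MeasurableSpace Ω] {μ : Measure Ω}

theorem integral_norm_mul_norm_le_sqrt_mul_sqrt {f g : Ω → ℝ} (hf : MemLp f 2 μ)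
    (hg : MemLp g 2 μ) :
    ∫ ω, ‖f ω‖ * ‖g ω‖ ∂μ ≤ √(∫ ω, f ω ^ 2 ∂μ) * √(∫ ω, g ω ^ 2 ∂μ) := by
  have h2 : ENNReal.ofReal 2 = 2 := by norm_num
  have holder := integral_mul_norm_le_Lp_mul_Lq Real.HolderConjugate.two_two
    (h2 ▸ hf) (h2 ▸ hg)
  simpa only [Real.norm_eq_abs, Real.rpow_two, sq_abs, Real.sqrt_eq_rpow] using holder

theorem abs_integral_mul_mul_le {c f g : Ω → ℝ} {C : ℝ} (hC : 0 ≤ C)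
    (hc : ∀ᵐ ω ∂μ, |c ω| ≤ C) (hf : MemLp f 2 μ) (hg : MemLp g 2 μ) :
    |∫ ω, c ω * f ω * g ω ∂μ| ≤ C * (√(∫ ω, f ω ^ 2 ∂μ) * √(∫ ω, g ω ^ 2 ∂μ)) := calc
  |∫ ω, c ω * f ω * g ω ∂μ| ≤ ∫ ω, |c ω * f ω * g ω| ∂μ := abs_integral_le_integral_abs
  _ ≤ ∫ ω, C * ‖f ω * g ω‖ ∂μ := by
    refine integral_mono_of_nonneg (ae_of_all _ fun _ => abs_nonneg _)
      ((hf.integrable_mul hg).norm.const_mul C) ?_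
    filter_upwards [hc] with ω hω
    rw [mul_assoc, abs_mul, Real.norm_eq_abs]
    exact mul_le_mul_of_nonneg_right hω (abs_nonneg _)
  _ ≤ C * (√(∫ ω, f ω ^ 2 ∂μ) * √(∫ ω, g ω ^ 2 ∂μ)) := by
    simp only [integral_const_mul, norm_mul]
    exact mul_le_mul_of_nonneg_left (integral_norm_mul_norm_le_sqrt_mul_sqrt hf hg) hC

end CauchySchwarz

theorem abs_div_le_div_of_le {a d C ε : ℝ} (hε : 0 < ε) (hd : ε ≤ d) (ha : |a| ≤ C) :
    |a / d| ≤ C / ε := by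
  rw [abs_div, abs_of_pos (hε.trans_le hd)]
  exact div_le_div₀ ((abs_nonneg a).trans ha) ha hε hd

section AIPW

variable {Ω 𝒳 : Type*} [MeasurableSpace Ω] [MeasurableSpace 𝒳]

/-- `e(X) = E[A | X]`, tested against bounded measurable functions of `X`. -/
def IsPropensityScore (μ : Measure Ω) (X : Ω → 𝒳) (A : Ω → ℝ) (e : 𝒳 → ℝ) : Prop :=
  ∀ v : 𝒳 → ℝ, Measurable v → (∃ C, ∀ x, |v x| ≤ C) →
    ∫ ω, v (X ω) * A ω ∂μ = ∫ ω, v (X ω) * e (X ω) ∂μ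

/-- `(1 - e(X)) m0(X) = E[(1 - A) Y | X]`; with `e` the propensity score this says
`m0(x) = E[Y | X = x, A = 0]`. -/
def IsControlOutcomeRegression (μ : Measure Ω) (X : Ω → 𝒳) (A Y : Ω → ℝ) (e m0 : 𝒳 → ℝ) :
    Prop :=
  ∀ v : 𝒳 → ℝ, Measurable v → (∃ C, ∀ x, |v x| ≤ C) →
    ∫ ω, v (X ω) * (1 - A ω) * Y ω ∂μ = ∫ ω, v (X ω) * (1 - e (X ω)) * m0 (X ω) ∂μ

variable {μ : Measure Ω}

theorem MeasureTheory.MemLp.mul_of_top {f g : Ω → ℝ} (hf : MemLp f ⊤ μ) (hg : MemLp g ⊤ μ) :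
    MemLp (fun ω => f ω * g ω) ⊤ μ :=
  hg.mul' hf

variable [IsFiniteMeasure μ] {X : Ω → 𝒳} {A Y : Ω → ℝ} {e m0 : 𝒳 → ℝ}

theorem memLp_comp_of_abs_le {p : ENNReal} (hX : Measurable X) {v : 𝒳 → ℝ} (hv : Measurable v)
    {C : ℝ} (hC : ∀ x, |v x| ≤ C) : MemLp (fun ω => v (X ω)) p μ :=
  .of_bound (hv.comp hX).aestronglyMeasurable C (ae_of_all _ fun ω => hC (X ω))

theorem integral_mul_add_mul_eq_of_regressions (hE : IsPropensityScore μ X A e)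
    (hM0 : IsControlOutcomeRegression μ X A Y e m0) (hX : Measurable X)
    (hA : MemLp A ⊤ μ) (hY : MemLp Y ⊤ μ) (he : MemLp (fun ω => e (X ω)) ⊤ μ)
    (hm0 : MemLp (fun ω => m0 (X ω)) ⊤ μ) {g h : 𝒳 → ℝ} {Cg Ch : ℝ} (hg : Measurable g)
    (hgB : ∀ x, |g x| ≤ Cg) (hh : Measurable h) (hhB : ∀ x, |h x| ≤ Ch) :
    ∫ ω, g (X ω) * A ω + h (X ω) * (1 - A ω) * Y ω ∂μ
      = ∫ ω, g (X ω) * e (X ω) + h (X ω) * (1 - e (X ω)) * m0 (X ω) ∂μ := by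
  have hg' : MemLp (fun ω => g (X ω)) ⊤ μ := memLp_comp_of_abs_le hX hg hgB
  have hh' : MemLp (fun ω => h (X ω)) ⊤ μ := memLp_comp_of_abs_le hX hh hhB
  have h1A : MemLp (fun ω => 1 - A ω) ⊤ μ := (memLp_const 1).sub hA
  have h1e : MemLp (fun ω => 1 - e (X ω)) ⊤ μ := (memLp_const 1).sub he
  rw [integral_add ((hg'.mul_of_top hA).integrable le_top)
      (((hh'.mul_of_top h1A).mul_of_top hY).integrable le_top),
    integral_add ((hg'.mul_of_top he).integrable le_top)
      (((hh'.mul_of_top h1e).mul_of_top hm0).integrable le_top),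
    hE g hg ⟨Cg, hgB⟩, hM0 h hh ⟨Ch, hhB⟩]

theorem integral_aipw_score_sub_eq (hE : IsPropensityScore μ X A e)
    (hM0 : IsControlOutcomeRegression μ X A Y e m0) (hX : Measurable X)
    (hA : MemLp A ⊤ μ) (hY : MemLp Y ⊤ μ) (he : MemLp (fun ω => e (X ω)) ⊤ μ)
    (hm0 : MemLp (fun ω => m0 (X ω)) ⊤ μ) {ech m0ch w : 𝒳 → ℝ} {ε : ℝ} (hε : 0 < ε)
    (hech : Measurable ech) (hechB : ∀ x, ε ≤ ech x ∧ ech x ≤ 1 - ε)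
    (hm0ch : Measurable m0ch) {Cm : ℝ} (hm0chB : ∀ x, |m0ch x| ≤ Cm)
    (hw : Measurable w) {Cw : ℝ} (hwB : ∀ x, |w x| ≤ Cw) :
    (∫ ω, w (X ω) * ((A ω - ech (X ω)) * m0ch (X ω) + (1 - A ω) * Y ω) / (1 - ech (X ω)) ∂μ)
        - ∫ ω, w (X ω) * m0 (X ω) ∂μ
      = ∫ ω, w (X ω) / (1 - ech (X ω)) * (ech (X ω) - e (X ω)) * (m0 (X ω) - m0ch (X ω)) ∂μ := by
  have hden : ∀ x, ε ≤ 1 - ech x := fun x => by linarith [(hechB x).2]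
  set r : 𝒳 → ℝ := fun x => w x / (1 - ech x)
  set g : 𝒳 → ℝ := fun x => r x * m0ch x
  have hr : Measurable r := hw.div (measurable_const.sub hech)
  have hrB : ∀ x, |r x| ≤ Cw / ε := fun x => abs_div_le_div_of_le hε (hden x) (hwB x)
  have hg : Measurable g := hr.mul hm0ch
  have hgB : ∀ x, |g x| ≤ Cw / ε * Cm := fun x => abs_mul (r x) (m0ch x) ▸
    mul_le_mul (hrB x) (hm0chB x) (abs_nonneg _) ((abs_nonneg _).trans (hrB x))
  have hg' : MemLp (fun ω => g (X ω)) ⊤ μ := memLp_comp_of_abs_le hX hg hgB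
  have hr' : MemLp (fun ω => r (X ω)) ⊤ μ := memLp_comp_of_abs_le hX hr hrB
  have hw' : MemLp (fun ω => w (X ω)) ⊤ μ := memLp_comp_of_abs_le hX hw hwB
  have hech' : MemLp (fun ω => ech (X ω)) ⊤ μ :=
    memLp_comp_of_abs_le hX hech (C := 1) fun x =>
      abs_le.2 ⟨by linarith [hechB x], by linarith [hechB x]⟩
  have hAY : MemLp (fun ω => g (X ω) * A ω + r (X ω) * (1 - A ω) * Y ω) ⊤ μ :=
    (hg'.mul_of_top hA).add ((hr'.mul_of_top ((memLp_const 1).sub hA)).mul_of_top hY)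
  have hem0 : MemLp (fun ω => g (X ω) * e (X ω) + r (X ω) * (1 - e (X ω)) * m0 (X ω)) ⊤ μ :=
    (hg'.mul_of_top he).add ((hr'.mul_of_top ((memLp_const 1).sub he)).mul_of_top hm0)
  have hgech := hg'.mul_of_top hech'
  have hwm0 := hw'.mul_of_top hm0
  calc
    _ = (∫ ω, g (X ω) * A ω + r (X ω) * (1 - A ω) * Y ω ∂μ)
        - (∫ ω, g (X ω) * ech (X ω) ∂μ) - (∫ ω, w (X ω) * m0 (X ω) ∂μ) := by
      rw [← integral_sub (hAY.integrable le_top) (hgech.integrable le_top)]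
      congr 2 with ω
      simp only [g, r]
      field_simp [(hε.trans_le (hden (X ω))).ne']
      ring
    _ = (∫ ω, g (X ω) * e (X ω) + r (X ω) * (1 - e (X ω)) * m0 (X ω) ∂μ)
        - (∫ ω, g (X ω) * ech (X ω) ∂μ) - (∫ ω, w (X ω) * m0 (X ω) ∂μ) := by
      rw [integral_mul_add_mul_eq_of_regressions hE hM0 hX hA hY he hm0 hg hgB hr hrB]
    _ = _ := by
      rw [← integral_sub (hem0.integrable le_top) (hgech.integrable le_top),
        ← integral_sub (by exact (hem0.sub hgech).integrable le_top) (hwm0.integrable le_top)]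
      congr 1 with ω
      simp only [g, r]
      field_simp [(hε.trans_le (hden (X ω))).ne']
      ring

end AIPW

theorem stmt_15_general {Ω 𝒳 : Type*} [MeasurableSpace Ω] [MeasurableSpace 𝒳]
    (μ : Measure Ω) [IsProbabilityMeasure μ]
    (X : Ω → 𝒳) (A Y : Ω → ℝ) (e m0 : 𝒳 → ℝ) (ebar : ℝ) (hebar : 0 < ebar)
    (hX : Measurable X) (hA : Measurable A) (hY : Measurable Y)
    (he : Measurable e) (hm0 : Measurable m0)
    (hAb : ∀ ω, A ω = 0 ∨ A ω = 1) (hYb : ∀ ω, Y ω = 0 ∨ Y ω = 1)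
    (heB : ∀ x, ebar ≤ e x ∧ e x ≤ 1 - ebar)
    (hm0B : ∀ x, 0 ≤ m0 x ∧ m0 x ≤ 1)
    (hE : ∀ v : 𝒳 → ℝ, Measurable v → (∃ C, ∀ x, |v x| ≤ C) →
      ∫ ω, v (X ω) * A ω ∂μ = ∫ ω, v (X ω) * e (X ω) ∂μ)
    (hM0 : ∀ v : 𝒳 → ℝ, Measurable v → (∃ C, ∀ x, |v x| ≤ C) →
      ∫ ω, v (X ω) * (1 - A ω) * Y ω ∂μ
        = ∫ ω, v (X ω) * (1 - e (X ω)) * m0 (X ω) ∂μ)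
    (ech m0ch : 𝒳 → ℝ) (hech : Measurable ech) (hm0ch : Measurable m0ch)
    (hechB : ∀ x, ebar ≤ ech x ∧ ech x ≤ 1 - ebar)
    (hm0chB : ∀ x, 0 ≤ m0ch x ∧ m0ch x ≤ 1)
    (w : 𝒳 → ℝ) (hw : Measurable w) (hwB : ∀ x, |w x| ≤ 1) :
    |(∫ ω, w (X ω) * ((A ω - ech (X ω)) * m0ch (X ω) + (1 - A ω) * Y ω)
          / (1 - ech (X ω)) ∂μ)
        - ∫ ω, w (X ω) * m0 (X ω) ∂μ| ≤
      ebar⁻¹ * Real.sqrt (∫ ω, (e (X ω) - ech (X ω)) ^ 2 ∂μ)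
        * Real.sqrt (∫ ω, (m0 (X ω) - m0ch (X ω)) ^ 2 ∂μ) := by
  have hunit : ∀ {a : ℝ}, 0 ≤ a → a ≤ 1 → |a| ≤ 1 := fun h0 h1 => abs_le.2 ⟨by linarith, h1⟩
  have hbin : ∀ {a : ℝ}, a = 0 ∨ a = 1 → |a| ≤ 1 := by rintro a (rfl | rfl) <;> norm_num
  have heB' : ∀ x, |e x| ≤ 1 := fun x => hunit (by linarith [heB x]) (by linarith [heB x])
  have hm0B' : ∀ x, |m0 x| ≤ 1 := fun x => hunit (hm0B x).1 (hm0B x).2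
  have hechB' : ∀ x, |ech x| ≤ 1 := fun x =>
    hunit (by linarith [hechB x]) (by linarith [hechB x])
  have hm0chB' : ∀ x, |m0ch x| ≤ 1 := fun x => hunit (hm0chB x).1 (hm0chB x).2
  have hweight : ∀ᵐ ω ∂μ, |w (X ω) / (1 - ech (X ω))| ≤ ebar⁻¹ := ae_of_all _ fun ω => by
    simpa only [one_div] using
      abs_div_le_div_of_le hebar (by linarith [hechB (X ω)]) (hwB (X ω))
  rw [integral_aipw_score_sub_eq hE hM0 hX
    (.of_bound hA.aestronglyMeasurable 1 (ae_of_all _ fun ω => hbin (hAb ω)))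
    (.of_bound hY.aestronglyMeasurable 1 (ae_of_all _ fun ω => hbin (hYb ω)))
    (memLp_comp_of_abs_le hX he heB') (memLp_comp_of_abs_le hX hm0 hm0B')
    hebar hech hechB hm0ch hm0chB' hw hwB]
  calc _ ≤ ebar⁻¹ * (√(∫ ω, (ech (X ω) - e (X ω)) ^ 2 ∂μ)
          * √(∫ ω, (m0 (X ω) - m0ch (X ω)) ^ 2 ∂μ)) :=
        abs_integral_mul_mul_le (inv_nonneg.2 hebar.le) hweight
          ((memLp_comp_of_abs_le hX hech hechB').sub (memLp_comp_of_abs_le hX he heB'))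
          ((memLp_comp_of_abs_le hX hm0 hm0B').sub (memLp_comp_of_abs_le hX hm0ch hm0chB'))
    _ = _ := by simp_rw [sub_sq_comm (ech _)]; ring

/-- Double robustness bound for the AIPW score for arm 0: if either the
propensity model `ě` or the outcome model `m̌0` is correct, the bias of the
score is controlled by the product of the two `L²` estimation errors. -/
theorem stmt_15 {Ω 𝒳 : Type*} [MeasurableSpace Ω] [MeasurableSpace 𝒳]
    (μ : Measure Ω) [IsProbabilityMeasure μ]
    (X : Ω → 𝒳) (A Y : Ω → ℝ) (e m0 : 𝒳 → ℝ) (ebar : ℝ) (hebar : 0 < ebar)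
    (hX : Measurable X) (hA : Measurable A) (hY : Measurable Y)
    (he : Measurable e) (hm0 : Measurable m0)
    (hAb : ∀ ω, A ω = 0 ∨ A ω = 1) (hYb : ∀ ω, Y ω = 0 ∨ Y ω = 1)
    (heB : ∀ x, ebar ≤ e x ∧ e x ≤ 1 - ebar)
    (hm0B : ∀ x, 0 ≤ m0 x ∧ m0 x ≤ 1)
    (hE : ∀ v : 𝒳 → ℝ, Measurable v → (∃ C, ∀ x, |v x| ≤ C) →
      ∫ ω, v (X ω) * A ω ∂μ = ∫ ω, v (X ω) * e (X ω) ∂μ)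
    (hM0 : ∀ v : 𝒳 → ℝ, Measurable v → (∃ C, ∀ x, |v x| ≤ C) →
      ∫ ω, v (X ω) * (1 - A ω) * Y ω ∂μ
        = ∫ ω, v (X ω) * (1 - e (X ω)) * m0 (X ω) ∂μ)
    (ech m0ch : 𝒳 → ℝ) (hech : Measurable ech) (hm0ch : Measurable m0ch)
    (hechB : ∀ x, ebar ≤ ech x ∧ ech x ≤ 1 - ebar)
    (hm0chB : ∀ x, 0 ≤ m0ch x ∧ m0ch x ≤ 1)
    (hcorrect : ech = e ∨ m0ch = m0)
    (w : 𝒳 → ℝ) (hw : Measurable w) (hwB : ∀ x, |w x| ≤ 1) :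
    |(∫ ω, w (X ω) * ((A ω - ech (X ω)) * m0ch (X ω) + (1 - A ω) * Y ω)
          / (1 - ech (X ω)) ∂μ)
        - ∫ ω, w (X ω) * m0 (X ω) ∂μ| ≤
      ebar⁻¹ * Real.sqrt (∫ ω, (e (X ω) - ech (X ω)) ^ 2 ∂μ)
        * Real.sqrt (∫ ω, (m0 (X ω) - m0ch (X ω)) ^ 2 ∂μ) :=
  stmt_15_general μ X A Y e m0 ebar hebar hX hA hY he hm0 hAb hYb heB hm0B hE hM0 ech m0ch hech
    hm0ch hechB hm0chB w hw hwB
end
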